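/- The structure category Δ_ℕ generated by the functions !ₙ : [n] → [1] for all n ∈ ℕ (under composition, coproducts, and similarity components) contains the transposition [2] → [2] sending 1 ↦ 2 and 2 ↦ 1, and hence Δ_ℕ equals the category of all functions between finite ordinals. In particular, the transposition factors as the composite of a similarity component of !₂ : [2] → [1] with the coproduct !₀ + id_{[2]} + !₀ : [2] → [4]. -/

import Mathlib

/-- The element of `Fin (∑ i, k i)` determined by block `p.1` and offset `p.2`. -/
def sigmaToFin {n : ℕ} {k : Fin n → ℕ} (p : (i : Fin n) × Fin (k i)) : Fin (∑ i, k i) :=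
  ⟨(∑ j ∈ Finset.univ.filter fun j => j < p.1, k j) + p.2.val, by
    have hsub := Finset.sum_le_sum_of_subset (f := k)
      (Finset.subset_univ (insert p.1 (Finset.univ.filter fun j => j < p.1)))
    rw [Finset.sum_insert (by simp)] at hsub
    have := p.2.isLt
    omega⟩

/-- Decomposition of an element of `Fin (∑ i, k i)` into a block index and an offset. -/
def finToSigma {n : ℕ} {k : Fin n → ℕ} (p : Fin (∑ i, k i)) : (i : Fin n) × Fin (k i) :=
  (List.ofFn fun i => List.ofFn fun x : Fin (k i) =>
    (⟨i, x⟩ : (i : Fin n) × Fin (k i))).flatten.get (Fin.cast (by simp [Function.comp_def, List.sum_ofFn]) p)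

/-- Coproduct of two functions between finite ordinals, acting blockwise. -/
def coprodMap {m₁ n₁ m₂ n₂ : ℕ} (f : Fin m₁ → Fin n₁) (g : Fin m₂ → Fin n₂) :
    Fin (m₁ + m₂) → Fin (n₁ + n₂) :=
  finSumFinEquiv ∘ Sum.map f g ∘ finSumFinEquiv.symm

/-- The similarity component `θ'_{k₁,…,kₙ}` of `θ : [m] → [n]`. -/
def simComp {m n : ℕ} (θ : Fin m → Fin n) (k : Fin n → ℕ) :
    Fin (∑ i, k (θ i)) → Fin (∑ j, k j) :=
  fun p => sigmaToFin ⟨θ (finToSigma p).1, (finToSigma p).2⟩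

/-- Cardinality of the fiber of `f` over `i`. -/
def fiberCard {m n : ℕ} (f : Fin m → Fin n) (i : Fin n) : ℕ :=
  (Finset.univ.filter fun x => f x = i).card

/-- A structure category: a wide subcategory of `FinOrd` closed under coproducts of
morphisms and under similarity components. -/
structure IsStructCat (Δ : ∀ m n : ℕ, Set (Fin m → Fin n)) : Prop where
  id_mem : ∀ n, id ∈ Δ n n
  comp_mem : ∀ {k m n : ℕ} (f : Fin k → Fin m) (g : Fin m → Fin n),
    f ∈ Δ k m → g ∈ Δ m n → g ∘ f ∈ Δ k n
  coprod_mem : ∀ {m₁ n₁ m₂ n₂ : ℕ} (f : Fin m₁ → Fin n₁) (g : Fin m₂ → Fin n₂),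
    f ∈ Δ m₁ n₁ → g ∈ Δ m₂ n₂ → coprodMap f g ∈ Δ (m₁ + m₂) (n₁ + n₂)
  sim_mem : ∀ {m n : ℕ} (θ : Fin m → Fin n), θ ∈ Δ m n → ∀ k : Fin n → ℕ,
    simComp θ k ∈ Δ (∑ i, k (θ i)) (∑ j, k j)

/-- A structure monoid: a subset of ℕ containing 1 and closed under `I`-indexed sums. -/
def IsStructMonoid (I : Set ℕ) : Prop :=
  1 ∈ I ∧ ∀ k ∈ I, ∀ a : Fin k → ℕ, (∀ i, a i ∈ I) → (∑ i, a i) ∈ I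

/-- `Δ^I` : functions all of whose fibers have cardinality in `I`. -/
def DeltaUp (I : Set ℕ) : ∀ m n : ℕ, Set (Fin m → Fin n) :=
  fun _ _ => {f | ∀ i, fiberCard f i ∈ I}

/-- The unique map `[n] → [1]`. -/
def bang (n : ℕ) : Fin n → Fin 1 := fun _ => 0

/-- `Δ_I` : the smallest structure category containing the maps `[n] → [1]` for `n ∈ I`. -/
def GenDelta (I : Set ℕ) : ∀ m n : ℕ, Set (Fin m → Fin n) := fun m n =>
  {f | ∀ Δ : ∀ m n : ℕ, Set (Fin m → Fin n), IsStructCat Δ →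
    (∀ k ∈ I, bang k ∈ Δ k 1) → f ∈ Δ m n}

/-!
Two generators suffice. The similarity component of `!₀` at the block size `j` is the empty
map `[0] → [j]`, so coproducts `!₀ + id_[1] + !₀` give every map `[1] → [n]`. The similarity
component of `!₂` at the constant block size `n` is `x ↦ x mod n`, the codiagonal
`[n] + [n] → [n]`. Any `f : [m + 1] → [n]` is the codiagonal after `f|[m] + f|{m+1}`, so by
induction on `m` every map lies in any structure category containing `!₀` and `!₂`.
-/

lemma exists_getElem_flatten_ofFn {α : Type*} (n : ℕ) (k : Fin n → ℕ)
    (F : (i : Fin n) → Fin (k i) → α) (p : ℕ)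
    (hp : p < (List.ofFn fun i => List.ofFn (F i)).flatten.length) :
    ∃ (b : Fin n) (off : Fin (k b)),
      (List.ofFn fun i => List.ofFn (F i)).flatten[p] = F b off ∧
      p = (∑ j ∈ Finset.univ.filter fun j => j < b, k j) + off.val := by
  induction n generalizing p with
  | zero => simp at hp
  | succ n ih =>
    simp only [List.ofFn_succ, List.flatten_cons, List.length_append, List.length_ofFn] at hp ⊢
    by_cases h : p < k 0
    · refine ⟨0, ⟨p, h⟩, ?_, by simp⟩
      rw [List.getElem_append_left (by simpa using h), List.getElem_ofFn]
    · rw [List.getElem_append_right (by simpa using h)]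
      obtain ⟨b, off, hget, hp'⟩ :=
        ih (fun i => k i.succ) (fun i => F i.succ) (p - k 0) (by omega)
      refine ⟨b.succ, off, by simp [hget], ?_⟩
      have hsum : (∑ j ∈ Finset.univ.filter fun j => j < b.succ, k j)
          = k 0 + ∑ j ∈ Finset.univ.filter fun j => j < b, k j.succ := by
        rw [Finset.sum_filter, Finset.sum_filter, Fin.sum_univ_succ]
        simp [Fin.succ_lt_succ_iff, Fin.succ_pos]
      omega

lemma sigmaToFin_finToSigma {n : ℕ} {k : Fin n → ℕ} (p : Fin (∑ i, k i)) :
    sigmaToFin (finToSigma p) = p := by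
  obtain ⟨b, off, hget, hp⟩ :=
    exists_getElem_flatten_ofFn n k (fun i x => (⟨i, x⟩ : (i : Fin n) × Fin (k i))) p
      (by simp [Function.comp_def, List.sum_ofFn])
  simp only [finToSigma, List.get_eq_getElem, Fin.val_cast, hget]
  exact Fin.ext hp.symm

lemma val_simComp_bang_const {m c : ℕ} (y : Fin (∑ i : Fin m, (fun _ : Fin 1 => c) (bang m i))) :
    (simComp (bang m) (fun _ => c) y).val = y.val % c := by
  have hy : y.val = (finToSigma y).1.val * c + (finToSigma y).2.val := by
    conv_lhs => rw [← sigmaToFin_finToSigma y]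
    simp [sigmaToFin, Finset.filter_gt_eq_Iio, mul_comm]
  have hoff : (simComp (bang m) (fun _ => c) y).val = (finToSigma y).2.val := by
    simp [simComp, sigmaToFin]
  rw [hoff, hy, Nat.mul_add_mod_self_right, Nat.mod_eq_of_lt (finToSigma y).2.isLt]

lemma coprodMap_castAdd {m₁ n₁ m₂ n₂ : ℕ} (f : Fin m₁ → Fin n₁) (g : Fin m₂ → Fin n₂)
    (x : Fin m₁) : coprodMap f g (Fin.castAdd m₂ x) = Fin.castAdd n₂ (f x) := by
  simp [coprodMap]

lemma coprodMap_natAdd {m₁ n₁ m₂ n₂ : ℕ} (f : Fin m₁ → Fin n₁) (g : Fin m₂ → Fin n₂)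
    (x : Fin m₂) : coprodMap f g (Fin.natAdd m₁ x) = Fin.natAdd n₁ (g x) := by
  simp [coprodMap]

def codiag (n : ℕ) : Fin (n + n) → Fin n := Fin.addCases id id

lemma codiag_castAdd {n : ℕ} (x : Fin n) : codiag n (Fin.castAdd n x) = x :=
  Fin.addCases_left x

lemma codiag_natAdd {n : ℕ} (x : Fin n) : codiag n (Fin.natAdd n x) = x :=
  Fin.addCases_right x

lemma val_codiag {n : ℕ} (x : Fin (n + n)) : (codiag n x).val = x.val % n := by
  induction x using Fin.addCases with
  | left x => rw [codiag_castAdd, Fin.val_castAdd, Nat.mod_eq_of_lt x.isLt]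
  | right x => rw [codiag_natAdd, Fin.val_natAdd, Nat.add_mod_left, Nat.mod_eq_of_lt x.isLt]

lemma codiag_comp_coprodMap {m₁ m₂ n : ℕ} (f : Fin (m₁ + m₂) → Fin n) :
    codiag n ∘ coprodMap (f ∘ Fin.castAdd m₂) (f ∘ Fin.natAdd m₁) = f := by
  funext x
  induction x using Fin.addCases <;>
    simp only [Function.comp_apply, coprodMap_castAdd, coprodMap_natAdd, codiag_castAdd,
      codiag_natAdd]

lemma mem_of_val_eq {Δ : ∀ m n : ℕ, Set (Fin m → Fin n)} {m n m' n' : ℕ} (hm : m = m')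
    (hn : n = n') {f : Fin m → Fin n} (hf : f ∈ Δ m n) {g : Fin m' → Fin n'}
    (hg : ∀ x, (g x).val = (f (Fin.cast hm.symm x)).val) : g ∈ Δ m' n' := by
  subst hm hn
  convert hf
  funext x
  exact Fin.ext (hg x)

namespace IsStructCat

variable {Δ : ∀ m n : ℕ, Set (Fin m → Fin n)}

lemma empty_mem (hΔ : IsStructCat Δ) (hb0 : bang 0 ∈ Δ 0 1) {j : ℕ} (f : Fin 0 → Fin j) :
    f ∈ Δ 0 j :=
  mem_of_val_eq (by simp) (by simp) (hΔ.sim_mem _ hb0 fun _ => j) fun x => x.elim0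

lemma fin_one_mem (hΔ : IsStructCat Δ) (hb0 : bang 0 ∈ Δ 0 1) {n : ℕ} (g : Fin 1 → Fin n) :
    g ∈ Δ 1 n := by
  have hc := hΔ.coprod_mem _ _
    (hΔ.coprod_mem _ _ (hΔ.empty_mem hb0 (Fin.elim0 : Fin 0 → Fin (g 0))) (hΔ.id_mem 1))
    (hΔ.empty_mem hb0 (Fin.elim0 : Fin 0 → Fin (n - 1 - g 0)))
  refine mem_of_val_eq (m' := 1) rfl (by omega) hc fun x => ?_
  obtain rfl : x = 0 := Subsingleton.elim _ _
  rfl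

lemma codiag_mem (hΔ : IsStructCat Δ) (hb2 : bang 2 ∈ Δ 2 1) (n : ℕ) : codiag n ∈ Δ (n + n) n :=
  mem_of_val_eq (by simp [two_mul]) (by simp) (hΔ.sim_mem _ hb2 fun _ => n) fun x => by
    rw [val_codiag, val_simComp_bang_const, Fin.val_cast]

lemma mem_of_bang_zero_of_bang_two (hΔ : IsStructCat Δ) (hb0 : bang 0 ∈ Δ 0 1)
    (hb2 : bang 2 ∈ Δ 2 1) {m n : ℕ} (f : Fin m → Fin n) : f ∈ Δ m n := by
  induction m generalizing n with
  | zero => exact hΔ.empty_mem hb0 f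
  | succ m ih =>
    rw [← codiag_comp_coprodMap f]
    exact hΔ.comp_mem _ _ (hΔ.coprod_mem _ _ (ih _) (hΔ.fin_one_mem hb0 _)) (hΔ.codiag_mem hb2 n)

end IsStructCat

/-- `Δ_ℕ`, generated by all maps `[n] → [1]`, contains the transposition of `[2]` and hence
equals the category of all functions; the transposition factors as the composite of a
similarity component of `!₂ : [2] → [1]` with the coproduct `!₀ + id_[2] + !₀ : [2] → [4]`. -/
theorem stmt_6 :
    ((![1, 0] : Fin 2 → Fin 2) ∈ GenDelta Set.univ 2 2) ∧
    (∀ m n : ℕ, GenDelta Set.univ m n = Set.univ) ∧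
    (∀ x : Fin (0 + 2 + 0),
      (simComp (bang 2) (fun _ => 2)
        (Fin.cast (by decide)
          (coprodMap (coprodMap (bang 0) (id : Fin 2 → Fin 2)) (bang 0) x))).val
        = ((![1, 0] : Fin 2 → Fin 2) x).val) := by
  have hall (m n : ℕ) : GenDelta Set.univ m n = Set.univ :=
    Set.eq_univ_of_forall fun f _ hΔ hb =>
      hΔ.mem_of_bang_zero_of_bang_two (hb 0 trivial) (hb 2 trivial) f
  exact ⟨hall 2 2 ▸ trivial, hall, by decide⟩
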